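/- arXiv:math/0410450 — 2 statements merged into one kernel-verified Lean document; each statement's English description precedes it below -/
import Mathlib

section
/- Let σ be an l-simplex in ℝ^n with ordered vertices v₀ < ⋯ < v_l, and define σ[i] ⊆ σ × [0,1] as the convex hull of {(v_j,0) : j ≤ i} ∪ {(v_j,1) : j ≥ i}. Then σ × [0,1] = ⋃_{i=0}^{l} σ[i]. -/
/-!
Write `x ∈ σ` as a convex combination `∑ c_j v_j` and let `T_i = ∑_{j ≥ i} c_j`, which decreases
from `T_0 = 1` to `0`; choose `i` with `T_{i+1} ≤ t ≤ T_i`. Lifting `v_j` to height `1` exactly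
for `j > i`, resp. `j ≥ i`, and keeping the weights `c` exhibits `(x, T_{i+1})` and `(x, T_i)` as
points of `σ[i]`, and `(x, t)` lies on the segment between them.
-/

open Set Finset

theorem exists_sum_smul_eq_of_mem_convexHull_range {E ι : Type*} [AddCommGroup E] [Module ℝ E]
    [Fintype ι] {v : ι → E} {x : E} (hx : x ∈ convexHull ℝ (range v)) :
    ∃ c : ι → ℝ, (∀ j, 0 ≤ c j) ∧ ∑ j, c j = 1 ∧ ∑ j, c j • v j = x := by
  classical
  obtain ⟨s, w, hw₀, hw₁, rfl⟩ := (convexHull_range_eq_exists_affineCombination v).subset hx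
  refine ⟨(s : Set ι).indicator w, fun j => Set.indicator_nonneg hw₀ j, ?_, ?_⟩
  · rwa [Finset.sum_indicator_subset _ s.subset_univ]
  · rw [Finset.affineCombination_indicator_subset _ _ s.subset_univ,
      Finset.affineCombination_eq_linear_combination _ _ _ (by
        rwa [Finset.sum_indicator_subset _ s.subset_univ])]

theorem exists_sum_filter_lt_le_le_sum_filter_le {ι : Type*} [Fintype ι] [LinearOrder ι]
    {c : ι → ℝ} (hc : ∑ j, c j = 1) {t : ℝ} (ht₀ : 0 ≤ t) (ht₁ : t ≤ 1) :
    ∃ i, ∑ j with i < j, c j ≤ t ∧ t ≤ ∑ j with i ≤ j, c j := by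
  have hι : (univ : Finset ι).Nonempty := by
    by_contra h
    simp [Finset.not_nonempty_iff_eq_empty.mp h] at hc
  set S : Finset ι := {i | t ≤ ∑ j with i ≤ j, c j}
  have hS : S.Nonempty := ⟨univ.min' hι, by simpa [S, Finset.min'_le, hc] using ht₁⟩
  set i := S.max' hS
  refine ⟨i, ?_, (Finset.mem_filter.mp (S.max'_mem hS)).2⟩
  rcases (filter (i < ·) univ).eq_empty_or_nonempty with h | h
  · rwa [h, sum_empty]
  · set k := Finset.min' _ h
    have hik : i < k := (Finset.mem_filter.mp (Finset.min'_mem _ h)).2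
    have hsucc : filter (k ≤ ·) univ = filter (i < ·) univ := by
      ext j
      simp only [Finset.mem_filter, Finset.mem_univ, true_and]
      exact ⟨hik.trans_le, fun hj => Finset.min'_le _ _ (by simpa using hj)⟩
    have hkS : k ∉ S := fun hk => (S.le_max' k hk).not_gt hik
    rw [← hsucc]
    exact (by simpa [S] using hkS : _ < t).le

section Prism

variable {E ι : Type*} [AddCommGroup E] [Module ℝ E] [LinearOrder ι]

def prismSimplex (v : ι → E) (i : ι) : Set (E × ℝ) :=
  convexHull ℝ ((fun j => (v j, (0 : ℝ))) '' {j | j ≤ i} ∪ (fun j => (v j, (1 : ℝ))) '' {j | i ≤ j})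

variable [Fintype ι] {v : ι → E} {c : ι → ℝ}

theorem mk_sum_smul_sum_filter_mem_prismSimplex (hc₀ : ∀ j, 0 ≤ c j) (hc₁ : ∑ j, c j = 1)
    {i : ι} (p : ι → Prop) [DecidablePred p] (hp : ∀ j, p j → i ≤ j) (hnp : ∀ j, ¬p j → j ≤ i) :
    (∑ j, c j • v j, ∑ j with p j, c j) ∈ prismSimplex v i := by
  have hsum :
      ∑ j, c j • (v j, if p j then (1 : ℝ) else 0) = (∑ j, c j • v j, ∑ j with p j, c j) := by
    ext <;> simp [Prod.fst_sum, Prod.snd_sum, Finset.sum_filter]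
  rw [← hsum]
  refine (convex_convexHull ℝ _).sum_mem (fun j _ => hc₀ j) hc₁ fun j _ => subset_convexHull ℝ _ ?_
  by_cases hj : p j
  · exact Or.inr ⟨j, hp j hj, by simp [hj]⟩
  · exact Or.inl ⟨j, hnp j hj, by simp [hj]⟩

theorem mk_sum_smul_mem_prismSimplex (hc₀ : ∀ j, 0 ≤ c j) (hc₁ : ∑ j, c j = 1) {i : ι} {t : ℝ}
    (hlo : ∑ j with i < j, c j ≤ t) (hhi : t ≤ ∑ j with i ≤ j, c j) :
    (∑ j, c j • v j, t) ∈ prismSimplex v i := by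
  have hbot := mk_sum_smul_sum_filter_mem_prismSimplex (v := v) hc₀ hc₁ (i < ·)
    (fun _ => le_of_lt) fun _ => not_lt.1
  have htop := mk_sum_smul_sum_filter_mem_prismSimplex (v := v) hc₀ hc₁ (i ≤ ·)
    (fun _ => id) fun _ h => (not_le.1 h).le
  refine (convex_convexHull ℝ _).segment_subset hbot htop ?_
  rw [← Prod.image_mk_segment_right, segment_eq_Icc (hlo.trans hhi)]
  exact mem_image_of_mem _ ⟨hlo, hhi⟩

theorem convexHull_range_prod_Icc_eq_iUnion_prismSimplex :
    convexHull ℝ (range v) ×ˢ Icc (0 : ℝ) 1 = ⋃ i, prismSimplex v i := by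
  refine Subset.antisymm ?_ (iUnion_subset fun i => convexHull_min ?_
    ((convex_convexHull ℝ _).prod (convex_Icc 0 1)))
  · rintro ⟨x, t⟩ ⟨hx, ht₀, ht₁⟩
    obtain ⟨c, hc₀, hc₁, rfl⟩ := exists_sum_smul_eq_of_mem_convexHull_range hx
    obtain ⟨i, hlo, hhi⟩ := exists_sum_filter_lt_le_le_sum_filter_le hc₁ ht₀ ht₁
    exact mem_iUnion.2 ⟨i, mk_sum_smul_mem_prismSimplex hc₀ hc₁ hlo hhi⟩
  · rintro _ (⟨j, -, rfl⟩ | ⟨j, -, rfl⟩) <;>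
      exact ⟨subset_convexHull ℝ _ (mem_range_self j), by norm_num⟩

end Prism

theorem stmt9_general (n l : ℕ) (v : Fin (l + 1) → (Fin n → ℝ)) :
    (convexHull ℝ (Set.range v)) ×ˢ (Set.Icc (0 : ℝ) 1) =
      ⋃ i : Fin (l + 1),
        convexHull ℝ
          ((fun j : Fin (l + 1) => ((v j, (0 : ℝ)) : (Fin n → ℝ) × ℝ)) ''
              {j | (j : ℕ) ≤ (i : ℕ)} ∪
            (fun j : Fin (l + 1) => ((v j, (1 : ℝ)) : (Fin n → ℝ) × ℝ)) ''
              {j | (i : ℕ) ≤ (j : ℕ)}) :=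
  -- `j ≤ i` on `Fin` unfolds to `(j : ℕ) ≤ (i : ℕ)`
  convexHull_range_prod_Icc_eq_iUnion_prismSimplex

/-- Prism decomposition: for an `l`-simplex `σ = convexHull {v 0, …, v l}` in `ℝ^n`,
the prism `σ × [0,1]` is the union of the simplices
`σ[i] = convexHull ({(v j, 0) : j ≤ i} ∪ {(v j, 1) : j ≥ i})` for `0 ≤ i ≤ l`. -/
theorem stmt9 (n l : ℕ) (v : Fin (l + 1) → (Fin n → ℝ)) (hv : AffineIndependent ℝ v) :
    (convexHull ℝ (Set.range v)) ×ˢ (Set.Icc (0 : ℝ) 1) =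
      ⋃ i : Fin (l + 1),
        convexHull ℝ
          ((fun j : Fin (l + 1) => ((v j, (0 : ℝ)) : (Fin n → ℝ) × ℝ)) ''
              {j | (j : ℕ) ≤ (i : ℕ)} ∪
            (fun j : Fin (l + 1) => ((v j, (1 : ℝ)) : (Fin n → ℝ) × ℝ)) ''
              {j | (i : ℕ) ≤ (j : ℕ)}) :=
  stmt9_general n l v
end

section
/- Let σ be an l-simplex with ordered vertices v₀ < ⋯ < v_l, let τ be the face spanned by v₀,…,v_{l−1}, and define σ[i] and τ[i] as the prism simplices. Then for each i < l, σ[i] equals the convex hull of τ[i] ∪ {(v_l, 1)}, and σ[l] equals the convex hull of (σ × {0}) ∪ {(v_l, 1)}. -/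
/-- Let `σ` be an `l`-simplex with ordered vertices `v 0 < ⋯ < v l`, let `τ` be the face
spanned by `v 0, …, v (l-1)`, and let `σ[i]`, `τ[i]` be the prism simplices.  Then for
`i < l`, `σ[i] = ⟨τ[i], (v l, 1)⟩`, and `σ[l] = ⟨σ × {0}, (v l, 1)⟩`, where `⟨A, u⟩`
denotes the convex hull of `A ∪ {u}`. -/
theorem stmt10 (n l : ℕ) (v : Fin (l + 1) → (Fin n → ℝ)) (hv : AffineIndependent ℝ v) :
    (∀ i : Fin (l + 1), (i : ℕ) < l →
      convexHull ℝ
          ((fun j : Fin (l + 1) => ((v j, (0 : ℝ)) : (Fin n → ℝ) × ℝ)) ''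
              {j | (j : ℕ) ≤ (i : ℕ)} ∪
            (fun j : Fin (l + 1) => ((v j, (1 : ℝ)) : (Fin n → ℝ) × ℝ)) ''
              {j | (i : ℕ) ≤ (j : ℕ)}) =
        convexHull ℝ
          ((convexHull ℝ
              ((fun j : Fin (l + 1) => ((v j, (0 : ℝ)) : (Fin n → ℝ) × ℝ)) ''
                  {j | (j : ℕ) ≤ (i : ℕ) ∧ (j : ℕ) < l} ∪
                (fun j : Fin (l + 1) => ((v j, (1 : ℝ)) : (Fin n → ℝ) × ℝ)) ''
                  {j | (i : ℕ) ≤ (j : ℕ) ∧ (j : ℕ) < l})) ∪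
            {((v (Fin.last l), (1 : ℝ)) : (Fin n → ℝ) × ℝ)})) ∧
    convexHull ℝ
        ((fun j : Fin (l + 1) => ((v j, (0 : ℝ)) : (Fin n → ℝ) × ℝ)) ''
            {j | (j : ℕ) ≤ l} ∪
          (fun j : Fin (l + 1) => ((v j, (1 : ℝ)) : (Fin n → ℝ) × ℝ)) ''
            {j | l ≤ (j : ℕ)}) =
      convexHull ℝ
        ((fun x : Fin n → ℝ => ((x, (0 : ℝ)) : (Fin n → ℝ) × ℝ)) ''
            convexHull ℝ (Set.range v) ∪
          {((v (Fin.last l), (1 : ℝ)) : (Fin n → ℝ) × ℝ)}) := by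
  constructor
  · intro i hi
    rw [convexHull_convexHull_union_left]
    congr 1
    have h1 : {j : Fin (l + 1) | (j : ℕ) ≤ (i : ℕ)} =
        ({j | (j : ℕ) ≤ (i : ℕ) ∧ (j : ℕ) < l} : Set (Fin (l + 1))) := by
      ext j; simp only [Set.mem_setOf_eq]; omega
    have h2 : {j : Fin (l + 1) | (i : ℕ) ≤ (j : ℕ)} =
        ({j | (i : ℕ) ≤ (j : ℕ) ∧ (j : ℕ) < l} : Set (Fin (l + 1))) ∪ {Fin.last l} := by
      ext j
      simp only [Set.mem_setOf_eq, Set.mem_union, Set.mem_singleton_iff,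
        Fin.ext_iff, Fin.val_last]
      omega
    rw [h1, h2, Set.image_union, Set.image_singleton, Set.union_assoc]
  · have h1 : {j : Fin (l + 1) | (j : ℕ) ≤ l} = Set.univ := by
      ext j; simpa using Nat.lt_succ_iff.mp j.isLt
    have h2 : {j : Fin (l + 1) | l ≤ (j : ℕ)} = {Fin.last l} := by
      ext j
      simp only [Set.mem_setOf_eq, Set.mem_singleton_iff, Fin.ext_iff, Fin.val_last]
      exact ⟨fun h => le_antisymm (Nat.lt_succ_iff.mp j.isLt) h, fun h => h.ge⟩
    have h3 : (fun x : Fin n → ℝ => ((x, (0 : ℝ)) : (Fin n → ℝ) × ℝ)) ''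
        convexHull ℝ (Set.range v) =
        convexHull ℝ ((fun j : Fin (l + 1) => ((v j, (0 : ℝ)) : (Fin n → ℝ) × ℝ)) ''
          Set.univ) := by
      have hlin : IsLinearMap ℝ (fun x : Fin n → ℝ => ((x, (0 : ℝ)) : (Fin n → ℝ) × ℝ)) :=
        ⟨fun x y => by simp [Prod.ext_iff], fun c x => by simp [Prod.ext_iff]⟩
      rw [hlin.image_convexHull, Set.image_univ, ← Set.range_comp]
      rfl
    rw [h1, h2, h3, Set.image_singleton, convexHull_convexHull_union_left]
end
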